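/- Let k, k' ≥ 1 and s ∈ Σ* with |s| ≥ k + k'. Then cap(S^gap_{k,k'}(s)) = 0 if and only if s is periodic with period gcd(k, k') (i.e., s_i = s_{i + gcd(k,k')} for all valid indices i). -/

import Mathlib

open Filter

noncomputable def cap {A : Type*} (S : Set (List A)) : ℝ :=
  Filter.limsup
    (fun n : ℕ => Real.logb 2 (({x ∈ S | x.length = n} : Set (List A)).ncard) / n)
    Filter.atTop

def Sys {A : Type*} (step : List A → List A → Prop) (s : List A) : Set (List A) :=
  {y | Relation.ReflTransGen step s y}

def GapStep {A : Type*} (k k' : ℕ) (x y : List A) : Prop :=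
  ∃ u v w z : List A, v.length = k ∧ w.length = k' ∧
    x = u ++ v ++ w ++ z ∧ y = u ++ v ++ w ++ v ++ z

/-
If `s` has period `g = gcd k k'`, it is a prefix of a `g`-periodic infinite word `c`, and a gap
duplication maps prefixes of `c` to prefixes of `c`: it copies a factor `k + k'` places to the
right and shifts the tail by `k`, both multiples of `g`. So each length carries at most one
reachable word and the capacity is `0`.

Otherwise some reachable word `y` has `y[t] ≠ y[t + k]`: `s` itself if it lacks period `k`, and
otherwise the word obtained from `s` by duplicating its first block, since `s` would else have
period `k'` as well, hence period `g` by the Fine–Wilf theorem. Lengthened at its end, `y`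
factors as `p ++ a :: m ++ b :: w ++ z` with `a ≠ b`, `|a :: m| = k`, `|b :: w| = k'`. Behind a
fixed head one can then insert either of the distinct blocks `m ++ [a]`, `m ++ [b]` any number of
times, which gives `2 ^ n` reachable words of length `C + n k` and capacity at least `1 / (k + 1)`.
-/

open Function

section

variable {A : Type*}

theorem List.exists_eq_append_of_le_length {l : List A} {n : ℕ} (h : n ≤ l.length) :
    ∃ l₁ l₂, l = l₁ ++ l₂ ∧ l₁.length = n :=
  ⟨_, _, (l.take_append_drop n).symm, by simp [h]⟩

theorem List.exists_eq_append_cons_append_cons_of_getElem?_ne {k k' t : ℕ} (hk : 0 < k) (hk' : 0 < k')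
    {y : List A} (hlen : t + k + k' ≤ y.length) (hne : y[t]? ≠ y[t + k]?) :
    ∃ (p m w z : List A) (a b : A), a ≠ b ∧ m.length + 1 = k ∧ w.length + 1 = k' ∧
      y = p ++ a :: m ++ b :: w ++ z := by
  obtain ⟨p, r, rfl, rfl⟩ := List.exists_eq_append_of_le_length (l := y) (n := t) (by omega)
  obtain ⟨_ | ⟨a, m⟩, r, rfl, hm⟩ :=
    List.exists_eq_append_of_le_length (l := r) (n := k) (by simp at hlen; omega)
  · simp at hm; omega
  obtain ⟨_ | ⟨b, w⟩, z, rfl, hw⟩ :=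
    List.exists_eq_append_of_le_length (l := r) (n := k') (by simp at hlen hm; omega)
  · simp at hw; omega
  refine ⟨p, m, w, z, a, b, ?_, by simpa using hm, by simpa using hw, by simp⟩
  rintro rfl
  apply hne
  subst hm
  simp

theorem List.flatMap_inj_of_length_eq {β : Type*} {f : β → List A} (hf : Injective f)
    (hlen : ∀ a b, (f a).length = (f b).length) :
    ∀ {L₁ L₂ : List β}, L₁.length = L₂.length → L₁.flatMap f = L₂.flatMap f → L₁ = L₂
  | [], [], _, _ => rfl
  | a :: L₁, b :: L₂, hL, h => by
    rw [List.flatMap_cons, List.flatMap_cons] at h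
    obtain ⟨hab, h⟩ := List.append_inj h (hlen a b)
    rw [hf hab, List.flatMap_inj_of_length_eq hf hlen (by simpa using hL) h]

theorem List.hasPeriod_iff_forall_getElem?_add {w : List A} {p : ℕ} :
    w.HasPeriod p ↔ ∀ i, i + p < w.length → w[i]? = w[i + p]? := by
  rw [List.hasPeriod_iff_getElem?]
  exact forall_congr' fun i => imp_congr_left (by omega)

theorem List.HasPeriod.of_getElem?_add_eq {s : List A} {k k' : ℕ} (hk : 0 < k)
    (hper : s.HasPeriod k) (h : ∀ u < k, s[u]? = s[u + k']?) (hlen : k + k' ≤ s.length) :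
    s.HasPeriod k' := by
  rw [List.hasPeriod_iff_forall_getElem?_mod] at hper
  rw [List.hasPeriod_iff_forall_getElem?_add]
  intro i hi
  have hik : i % k < k := Nat.mod_lt i hk
  calc s[i]? = s[i % k]? := hper i (by omega)
    _ = s[i % k + k']? := h _ hik
    _ = s[(i % k + k') % k]? := hper _ (by omega)
    _ = s[i + k']? := by rw [Nat.mod_add_mod, ← hper _ hi]

theorem List.map_range'_add_of_periodic {c : ℕ → A} {P : ℕ} (hc : Periodic c P) (a n : ℕ) :
    (List.range' (a + P) n).map c = (List.range' a n).map c := by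
  rw [Nat.add_comm, ← List.map_add_range', List.map_map]
  congr 1
  funext x
  simp [Nat.add_comm P, hc x]

theorem List.HasPeriod.exists_periodic {s : List A} {g : ℕ} (hs : s.HasPeriod g) (hg : 0 < g)
    (hgs : g ≤ s.length) :
    ∃ c : ℕ → A, Periodic c g ∧ s = (List.range' 0 s.length).map c := by
  refine ⟨fun i => s[i % g]'((Nat.mod_lt i hg).trans_le hgs), fun i => by simp, ?_⟩
  refine List.ext_getElem (by simp) fun i hi _ => ?_
  have := hs.getElem?_mod g i s hi
  simp only [List.getElem_map, List.getElem_range', Nat.zero_add, Nat.one_mul]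
  rw [List.getElem?_eq_getElem hi, List.getElem?_eq_getElem] at this
  exact (Option.some_injective _ this).symm

theorem cap_eq_zero_of_subsingleton {S : Set (List A)}
    (h : ∀ n, {x ∈ S | x.length = n}.Subsingleton) : cap S = 0 := by
  have hlog : ∀ n, Real.logb 2 ({x ∈ S | x.length = n}.ncard) = 0 := fun n => by
    rcases (h n).eq_empty_or_singleton with h0 | ⟨x, hx⟩ <;> simp [*]
  simp [cap, hlog]

theorem ncard_setOf_length_eq_le [Fintype A] (S : Set (List A)) (n : ℕ) :
    {x ∈ S | x.length = n}.ncard ≤ Fintype.card A ^ n := by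
  calc {x ∈ S | x.length = n}.ncard ≤ {x : List A | x.length = n}.ncard :=
        Set.ncard_le_ncard (fun _ hx => hx.2) (List.finite_length_eq A n)
    _ = Fintype.card A ^ n := by
        rw [← Nat.card_coe_set_eq]
        exact (Nat.card_eq_fintype_card (α := List.Vector A n)).trans (card_vector n)

theorem logb_ncard_div_le [Fintype A] (S : Set (List A)) (n : ℕ) :
    Real.logb 2 ({x ∈ S | x.length = n}.ncard) / n ≤ Real.logb 2 (Fintype.card A) := by
  have hA : 0 ≤ Real.logb 2 (Fintype.card A) := by
    rcases Nat.eq_zero_or_pos (Fintype.card A) with h | h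
    · simp [h]
    · exact Real.logb_nonneg one_lt_two (by exact_mod_cast h)
  rcases Nat.eq_zero_or_pos {x ∈ S | x.length = n}.ncard with hc | hc
  · simpa [hc] using hA
  rcases Nat.eq_zero_or_pos n with rfl | hn
  · simpa using hA
  rw [div_le_iff₀ (by exact_mod_cast hn), mul_comm, ← Real.logb_pow]
  exact Real.logb_le_logb_of_le one_lt_two (by exact_mod_cast hc)
    (by exact_mod_cast ncard_setOf_length_eq_le S n)

theorem one_div_le_cap [Fintype A] {S : Set (List A)} {C K : ℕ} (hK : 0 < K)
    (h : ∀ m, 2 ^ m ≤ {x ∈ S | x.length = C + m * K}.ncard) : 1 / (K + 1 : ℝ) ≤ cap S := by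
  refine le_limsup_of_frequently_le (frequently_atTop.2 fun N => ?_)
    (isBoundedUnder_of ⟨_, logb_ncard_div_le S⟩)
  set m := N + C + 1
  refine ⟨C + m * K, le_add_left (Nat.le_mul_of_pos_right _ hK |>.trans' (by omega)), ?_⟩
  have hm : (m : ℝ) ≤ Real.logb 2 ({x ∈ S | x.length = C + m * K}.ncard) := by
    rw [Real.le_logb_iff_rpow_le one_lt_two (by exact_mod_cast (Nat.one_le_two_pow).trans (h m))]
    exact_mod_cast h m
  have hn : ((C + m * K : ℕ) : ℝ) ≤ m * (K + 1) := by
    push_cast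
    have : (C : ℝ) + 1 ≤ m := by simp [m]
    nlinarith
  have hpos : (0 : ℝ) < (C + m * K : ℕ) := by positivity
  rw [div_le_div_iff₀ (by positivity) hpos, one_mul]
  nlinarith

theorem Sys.tail {step : List A → List A → Prop} {s y z : List A} (hy : y ∈ Sys step s)
    (h : step y z) : z ∈ Sys step s :=
  Relation.ReflTransGen.tail hy h

theorem two_pow_le_ncard_sys [Finite A] {step : List A → List A → Prop} {s H t B₀ B₁ : List A}
    (hB : B₀ ≠ B₁) (hlen : B₀.length = B₁.length) (h₀ : ∀ r, step (H ++ r) (H ++ (B₀ ++ r)))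
    (h₁ : ∀ r, step (H ++ r) (H ++ (B₁ ++ r))) (ht : H ++ t ∈ Sys step s) (m : ℕ) :
    2 ^ m ≤ {x ∈ Sys step s | x.length = (H ++ t).length + m * B₀.length}.ncard := by
  let block : Bool → List A := fun b => cond b B₁ B₀
  have block_inj : Injective block := by
    intro b b' h
    cases b <;> cases b' <;> simp_all [block, eq_comm]
  have block_len : ∀ b, (block b).length = B₀.length := by
    intro b
    cases b <;> simp [block, hlen]
  have reach : ∀ L : List Bool, H ++ (L.flatMap block ++ t) ∈ Sys step s := by
    intro L
    induction L with
    | nil => simpa using ht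
    | cons b L ih =>
      rw [List.flatMap_cons, List.append_assoc]
      cases b
      · exact Sys.tail ih (h₀ _)
      · exact Sys.tail ih (h₁ _)
  let word : (Fin m → Bool) → List A := fun e => H ++ ((List.ofFn e).flatMap block ++ t)
  have word_inj : Injective word := fun e e' h =>
    List.ofFn_injective <| List.flatMap_inj_of_length_eq block_inj
      (fun a b => by rw [block_len, block_len]) (by simp)
      (List.append_cancel_right (List.append_cancel_left h))
  have hrange : Set.range word ⊆ {x ∈ Sys step s | x.length = (H ++ t).length + m * B₀.length} := by
    rintro _ ⟨e, rfl⟩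
    refine ⟨reach _, ?_⟩
    simp [word, List.length_flatMap, block_len, comp_def]
    ring
  calc 2 ^ m = (Set.range word).ncard := by
        rw [← Set.image_univ, Set.ncard_image_of_injective _ word_inj, Set.ncard_univ]
        simp
    _ ≤ _ := Set.ncard_le_ncard hrange ((List.finite_length_eq A _).subset fun _ hx => hx.2)

namespace GapStep

variable {k k' : ℕ}

theorem intro (u : List A) {v w : List A} (z : List A) (hv : v.length = k) (hw : w.length = k') :
    GapStep k k' (u ++ v ++ w ++ z) (u ++ v ++ w ++ v ++ z) :=
  ⟨u, v, w, z, hv, hw, rfl, rfl⟩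

theorem length_eq {x y : List A} (h : GapStep k k' x y) : y.length = x.length + k := by
  obtain ⟨u, v, w, z, hv, -, rfl, rfl⟩ := h
  simp only [List.length_append, hv]
  omega

theorem exists_eq_take_append {x y : List A} (h : GapStep k k' x y) :
    ∃ p, p + k + k' ≤ x.length ∧
      y = x.take (p + k + k') ++ (x.drop p).take k ++ x.drop (p + k + k') := by
  obtain ⟨u, v, w, z, hv, hw, rfl, rfl⟩ := h
  have hl : (u ++ v ++ w).length = u.length + k + k' := by simp [hv, hw, Nat.add_assoc]
  refine ⟨u.length, by rw [← hl]; simp, ?_⟩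
  have hdrop : (u ++ v ++ w ++ z).drop u.length = v ++ (w ++ z) := by simp
  rw [List.take_left' hl, List.drop_left' hl, hdrop, List.take_left' hv]

theorem exists_append_self {x : List A} (hx : k + k' ≤ x.length) :
    ∃ v : List A, v.length = k ∧ GapStep k k' x (x ++ v) := by
  obtain ⟨u, r, rfl, hr⟩ : ∃ u r, x = u ++ r ∧ r.length = k + k' :=
    ⟨_, _, (List.take_append_drop (x.length - (k + k')) x).symm, by simp; omega⟩
  refine ⟨r.take k, by simp; omega, ?_⟩
  have := intro (k := k) (k' := k') u [] (v := r.take k) (w := r.drop k) (by simp; omega)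
    (by simp; omega)
  simpa using this

/-- In the head `p ++ a :: m ++ b :: w ++ [a]`, duplicating `a :: m` (at `|p|`) and `m ++ [b]`
(at `|p| + 1`) both amount to inserting a block of length `k` right behind the head. -/
theorem append_block_left (p m w t : List A) (a b : A) (hm : m.length + 1 = k)
    (hw : w.length + 1 = k') :
    GapStep k k' (p ++ a :: m ++ b :: w ++ [a] ++ t)
      (p ++ a :: m ++ b :: w ++ [a] ++ (m ++ [a] ++ t)) := by
  simpa using intro p (a :: t) (v := a :: m) (w := b :: w) (by simpa) (by simpa)

theorem append_block_right (p m w t : List A) (a b : A) (hm : m.length + 1 = k)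
    (hw : w.length + 1 = k') :
    GapStep k k' (p ++ a :: m ++ b :: w ++ [a] ++ t)
      (p ++ a :: m ++ b :: w ++ [a] ++ (m ++ [b] ++ t)) := by
  simpa using intro (p ++ [a]) t (v := m ++ [b]) (w := w ++ [a]) (by simpa) (by simpa)

theorem eq_map_range' {c : ℕ → A} (hk : Periodic c k) (hk' : Periodic c k') {x y : List A}
    (h : GapStep k k' x y) (hx : x = (List.range' 0 x.length).map c) :
    y = (List.range' 0 y.length).map c := by
  obtain ⟨p, hp, rfl⟩ := h.exists_eq_take_append
  obtain ⟨L, hL⟩ : ∃ L, x.length = L := ⟨_, rfl⟩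
  rw [hL] at hx hp
  subst hx
  have e₁ : ((List.range' 0 L).map c).take (p + k + k') = (List.range' 0 (p + k + k')).map c := by
    rw [← List.map_take, List.take_range'_of_length_ge hp]
  have e₂ : (((List.range' 0 L).map c).drop p).take k = (List.range' (p + k + k') k).map c := by
    rw [← List.map_drop, ← List.map_take, List.drop_range', List.take_range'_of_length_ge (by omega),
      Nat.add_assoc p, List.map_range'_add_of_periodic (hk.add_period hk')]
    simp
  have e₃ : ((List.range' 0 L).map c).drop (p + k + k') =
      (List.range' (p + k + k' + k) (L - (p + k + k'))).map c := by
    rw [← List.map_drop, List.drop_range', List.map_range'_add_of_periodic hk]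
    simp
  have hsplit (m n : ℕ) : List.range' 0 m ++ List.range' m n = List.range' 0 (m + n) := by
    simpa using @List.range'_append_1 0 m n
  rw [e₁, e₂, e₃, ← List.map_append, ← List.map_append, hsplit, hsplit]
  simp

theorem eq_map_range'_of_mem_sys {c : ℕ → A} (hk : Periodic c k) (hk' : Periodic c k')
    {s x : List A} (hs : s = (List.range' 0 s.length).map c) (hx : x ∈ Sys (GapStep k k') s) :
    x = (List.range' 0 x.length).map c := by
  induction hx with
  | refl => exact hs
  | tail _ h ih => exact h.eq_map_range' hk hk' ih

end GapStep

section Extension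

variable {k k' : ℕ} {s : List A}

theorem length_le_of_mem_sys_gapStep {x : List A} (hx : x ∈ Sys (GapStep k k') s) :
    s.length ≤ x.length := by
  induction hx with
  | refl => rfl
  | tail _ h ih => rw [h.length_eq]; omega

theorem exists_mem_sys_gapStep_prefix_length_ge (hk : 0 < k) (hs : k + k' ≤ s.length)
    {y : List A} (hy : y ∈ Sys (GapStep k k') s) (N : ℕ) :
    ∃ y' ∈ Sys (GapStep k k') s, y <+: y' ∧ N ≤ y'.length := by
  induction N with
  | zero => exact ⟨y, hy, List.prefix_refl y, Nat.zero_le _⟩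
  | succ N ih =>
    obtain ⟨y', hy', hpre, hN⟩ := ih
    obtain ⟨v, hv, hstep⟩ :=
      GapStep.exists_append_self (hs.trans (length_le_of_mem_sys_gapStep hy'))
    exact ⟨y' ++ v, Sys.tail hy' hstep, hpre.trans (List.prefix_append _ _), by simp; omega⟩

end Extension

theorem exists_mem_sys_gapStep_not_hasPeriod {k k' : ℕ} {s : List A} (hk : 0 < k)
    (hs : k + k' ≤ s.length) (h : ¬ s.HasPeriod (k.gcd k')) :
    ∃ y ∈ Sys (GapStep k k') s, ¬ y.HasPeriod k := by
  by_cases hsk : s.HasPeriod k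
  swap
  · exact ⟨s, Relation.ReflTransGen.refl, hsk⟩
  obtain ⟨v, r, rfl, hv⟩ := List.exists_eq_append_of_le_length (l := s) (n := k) (by omega)
  obtain ⟨w, z, rfl, hw⟩ :=
    List.exists_eq_append_of_le_length (l := r) (n := k') (by simp at hs; omega)
  refine ⟨v ++ (w ++ (v ++ z)), Sys.tail Relation.ReflTransGen.refl
    (by simpa using GapStep.intro [] z hv hw), fun hy => h ?_⟩
  have hk' : (v ++ (w ++ z)).HasPeriod k' := by
    -- at `u + k'`, the period `k` of the new word compares `s[u + k']` with the copy of `s[u]`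
    refine hsk.of_getElem?_add_eq hk (fun u hu => ?_) hs
    have hyu := List.hasPeriod_iff_forall_getElem?_add.1 hy (u + k') (by simp; omega)
    have hlen : u + k' < (v ++ w).length := by simp; omega
    have hy_split : v ++ (w ++ (v ++ z)) = (v ++ w) ++ (v ++ z) := by simp
    have e1 : (v ++ (w ++ (v ++ z)))[u + k']? = (v ++ (w ++ z))[u + k']? := by
      rw [hy_split, List.getElem?_append_left hlen, ← List.append_assoc,
        List.getElem?_append_left hlen]
    have e2 : (v ++ (w ++ (v ++ z)))[u + k' + k]? = (v ++ (w ++ z))[u]? := by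
      rw [hy_split, List.getElem?_append_right (by simp; omega),
        List.getElem?_append_left (by simp; omega), List.getElem?_append_left (by omega)]
      congr 1
      simp
      omega
    rw [← e2, ← hyu, e1]
  exact hsk.gcd hk' (by omega)

section GapCapacity

variable {k k' : ℕ} {s : List A}

theorem cap_sys_gapStep_eq_zero (hk : 0 < k) (hs : k + k' ≤ s.length)
    (hper : s.HasPeriod (k.gcd k')) : cap (Sys (GapStep k k') s) = 0 := by
  have hg : 0 < k.gcd k' := Nat.gcd_pos_of_pos_left _ hk
  obtain ⟨c, hc, hsc⟩ := hper.exists_periodic hg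
    ((Nat.gcd_le_left _ hk).trans (by omega))
  have hck : Periodic c k := by
    simpa [Nat.div_mul_cancel (Nat.gcd_dvd_left k k')] using hc.nat_mul (k / k.gcd k')
  have hck' : Periodic c k' := by
    simpa [Nat.div_mul_cancel (Nat.gcd_dvd_right k k')] using hc.nat_mul (k' / k.gcd k')
  refine cap_eq_zero_of_subsingleton fun n x hx y hy => ?_
  rw [GapStep.eq_map_range'_of_mem_sys hck hck' hsc hx.1,
    GapStep.eq_map_range'_of_mem_sys hck hck' hsc hy.1, hx.2, hy.2]

theorem cap_sys_gapStep_pos [Fintype A] (hk : 0 < k) (hk' : 0 < k') (hs : k + k' ≤ s.length)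
    (hper : ¬ s.HasPeriod (k.gcd k')) : 0 < cap (Sys (GapStep k k') s) := by
  obtain ⟨y, hy, hyk⟩ := exists_mem_sys_gapStep_not_hasPeriod hk hs hper
  obtain ⟨t, ht, hne⟩ : ∃ t, t + k < y.length ∧ y[t]? ≠ y[t + k]? := by
    simpa [List.hasPeriod_iff_forall_getElem?_add] using hyk
  obtain ⟨_, hy', ⟨r, rfl⟩, hlen⟩ :=
    exists_mem_sys_gapStep_prefix_length_ge hk hs hy (t + k + k')
  rw [← List.getElem?_append_left (l₂ := r) (by omega),
    ← List.getElem?_append_left (l₂ := r) ht] at hne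
  obtain ⟨p, m, w, z, a, b, hab, hm, hw, hsplit⟩ :=
    List.exists_eq_append_cons_append_cons_of_getElem?_ne hk hk' hlen hne
  have hH : p ++ a :: m ++ b :: w ++ [a] ++ (m ++ z) ∈ Sys (GapStep k k') s := by
    have hstep := GapStep.intro (k := k) (k' := k') p z (v := a :: m) (w := b :: w)
      (by simpa) (by simpa)
    rw [hsplit] at hy'
    exact Sys.tail hy' (by simpa using hstep)
  have hcount := two_pow_le_ncard_sys (by simpa using hab) (by simp)
    (GapStep.append_block_left p m w · a b hm hw)
    (GapStep.append_block_right p m w · a b hm hw) hH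
  exact lt_of_lt_of_le (by positivity) (one_div_le_cap (by simp) hcount)

end GapCapacity

end

theorem stmt18_general {A : Type*} [Fintype A] (k k' : ℕ)
    (hk : 1 ≤ k) (hk' : 1 ≤ k') (s : List A) (hs : k + k' ≤ s.length) :
    cap (Sys (GapStep k k') s) = 0 ↔
      ∀ i : ℕ, i + Nat.gcd k k' < s.length → s[i]? = s[i + Nat.gcd k k']? := by
  rw [← List.hasPeriod_iff_forall_getElem?_add]
  refine ⟨fun hcap => ?_, cap_sys_gapStep_eq_zero hk hs⟩
  by_contra hper
  exact (cap_sys_gapStep_pos hk hk' hs hper).ne' hcap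

theorem stmt18 {A : Type*} [Fintype A] [DecidableEq A] (k k' : ℕ)
    (hk : 1 ≤ k) (hk' : 1 ≤ k') (s : List A) (hs : k + k' ≤ s.length) :
    cap (Sys (GapStep k k') s) = 0 ↔
      ∀ i : ℕ, i + Nat.gcd k k' < s.length → s[i]? = s[i + Nat.gcd k k']? :=
  stmt18_general k k' hk hk' s hs
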